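/- arXiv:1807.02695 — 2 statements merged into one kernel-verified Lean document; each statement's English description precedes it below -/
import Mathlib

section
/- Continuation Principle for the L-domination game: Let G be a finite simple graph without isolated vertices and let B ⊆ A ⊆ V(G). Then γ_Lg(G|A) ≤ γ_Lg(G|B) and γ'_Lg(G|A) ≤ γ'_Lg(G|B). -/
/- Formalization of the domination games from "The variety of domination games".

A game is specified by a legality predicate `legal : List V → V → Prop`, where the list
records the previously played vertices (most recent first).  Players alternate moves;
each move must be legal; the game ends when no legal move exists.  Dominator wants to
minimize, Staller to maximize, the total number of moves.

`canEnd legal k turn h` states that, with history `h` and the player to move given by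
`turn` (`true` = Dominator), Dominator can guarantee that at most `k` further moves are
played (against any play of Staller).  The value of the game under optimal play by both
players is then the least such `k` from the empty history. -/

/-- The closed neighborhood `N[v]` of a vertex. -/
def closedNbhd {V : Type*} (G : SimpleGraph V) (v : V) : Set V :=
  insert v (G.neighborSet v)

/-- `⋃_{u ∈ h} N[u]` : the set of vertices dominated by the moves in `h`. -/
def dominatedBy {V : Type*} (G : SimpleGraph V) (h : List V) : Set V :=
  ⋃ u ∈ h, closedNbhd G u

/-- `⋃_{u ∈ h} N(u)` : the set of vertices totally dominated by the moves in `h`. -/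
def totDominatedBy {V : Type*} (G : SimpleGraph V) (h : List V) : Set V :=
  ⋃ u ∈ h, G.neighborSet u

/-- Legality in the domination game: `N[v] \ ⋃_{j<i} N[v_j] ≠ ∅`. -/
def dgLegal {V : Type*} (G : SimpleGraph V) (h : List V) (v : V) : Prop :=
  (closedNbhd G v \ dominatedBy G h).Nonempty

/-- Legality in the total domination game: `N(v) \ ⋃_{j<i} N(v_j) ≠ ∅`. -/
def tgLegal {V : Type*} (G : SimpleGraph V) (h : List V) (v : V) : Prop :=
  (G.neighborSet v \ totDominatedBy G h).Nonempty

/-- Legality in the Z-domination game on `G|A`: `N(v) \ (A ∪ ⋃_{j<i} N[v_j]) ≠ ∅`. -/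
def zLegal {V : Type*} (G : SimpleGraph V) (A : Set V) (h : List V) (v : V) : Prop :=
  (G.neighborSet v \ (A ∪ dominatedBy G h)).Nonempty

/-- Legality in the LL-domination game on `G|A`: `N[v] \ (A ∪ ⋃_{j<i} N(v_j)) ≠ ∅`. -/
def llLegal {V : Type*} (G : SimpleGraph V) (A : Set V) (h : List V) (v : V) : Prop :=
  (closedNbhd G v \ (A ∪ totDominatedBy G h)).Nonempty

/-- Legality in the L-domination game on `G|A`: as in the LL-game, and moreover no vertex
may be played twice. -/
def lLegal {V : Type*} (G : SimpleGraph V) (A : Set V) (h : List V) (v : V) : Prop :=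
  llLegal G A h v ∧ v ∉ h

/-- `canEnd legal k turn h` : with previously played vertices `h` and the player to move
given by `turn` (`true` = Dominator, `false` = Staller), Dominator has a strategy
guaranteeing that at most `k` further moves are made. -/
def canEnd {V : Type*} (legal : List V → V → Prop) : ℕ → Bool → List V → Prop
  | 0, _, h => ∀ v, ¬ legal h v
  | k+1, true, h => (∀ v, ¬ legal h v) ∨ ∃ v, legal h v ∧ canEnd legal k false (v :: h)
  | k+1, false, h => ∀ v, legal h v → canEnd legal k true (v :: h)

/-- The number of moves in the game with legality predicate `legal` when both players play
optimally (Dominator minimizing, Staller maximizing the number of moves); `dFirst = true`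
means Dominator makes the first move. -/
noncomputable def gameVal {V : Type*} (legal : List V → V → Prop) (dFirst : Bool) : ℕ :=
  sInf {k | canEnd legal k dFirst []}

/-- The game Z-domination number `γ_Zg(G|A)` (Dominator starts). -/
noncomputable def gammaZgA {V : Type*} (G : SimpleGraph V) (A : Set V) : ℕ :=
  gameVal (zLegal G A) true

/-- The Staller-start game Z-domination number `γ'_Zg(G|A)`. -/
noncomputable def gammaZgA' {V : Type*} (G : SimpleGraph V) (A : Set V) : ℕ :=
  gameVal (zLegal G A) false

/-- The game L-domination number `γ_Lg(G|A)` (Dominator starts). -/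
noncomputable def gammaLgA {V : Type*} (G : SimpleGraph V) (A : Set V) : ℕ :=
  gameVal (lLegal G A) true

/-- The Staller-start game L-domination number `γ'_Lg(G|A)`. -/
noncomputable def gammaLgA' {V : Type*} (G : SimpleGraph V) (A : Set V) : ℕ :=
  gameVal (lLegal G A) false

/-- The game LL-domination number `γ_LLg(G|A)` (Dominator starts). -/
noncomputable def gammaLLgA {V : Type*} (G : SimpleGraph V) (A : Set V) : ℕ :=
  gameVal (llLegal G A) true

/-- The Staller-start game LL-domination number `γ'_LLg(G|A)`. -/
noncomputable def gammaLLgA' {V : Type*} (G : SimpleGraph V) (A : Set V) : ℕ :=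
  gameVal (llLegal G A) false

/-- The game domination number `γ_g(G)` (Dominator starts). -/
noncomputable def gammaG {V : Type*} (G : SimpleGraph V) : ℕ :=
  gameVal (dgLegal G) true

/-- The game total domination number `γ_tg(G)` (Dominator starts). -/
noncomputable def gammaTg {V : Type*} (G : SimpleGraph V) : ℕ :=
  gameVal (tgLegal G) true

/-- The game Z-domination number `γ_Zg(G)` (Dominator starts). -/
noncomputable def gammaZg {V : Type*} (G : SimpleGraph V) : ℕ := gammaZgA G ∅

/-- The Staller-start game Z-domination number `γ'_Zg(G)`. -/
noncomputable def gammaZg' {V : Type*} (G : SimpleGraph V) : ℕ := gammaZgA' G ∅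

/-- The game L-domination number `γ_Lg(G)` (Dominator starts). -/
noncomputable def gammaLg {V : Type*} (G : SimpleGraph V) : ℕ := gammaLgA G ∅

/-- The Staller-start game L-domination number `γ'_Lg(G)`. -/
noncomputable def gammaLg' {V : Type*} (G : SimpleGraph V) : ℕ := gammaLgA' G ∅

/-- The game LL-domination number `γ_LLg(G)` (Dominator starts). -/
noncomputable def gammaLLg {V : Type*} (G : SimpleGraph V) : ℕ := gammaLLgA G ∅

/-- The Staller-start game LL-domination number `γ'_LLg(G)`. -/
noncomputable def gammaLLg' {V : Type*} (G : SimpleGraph V) : ℕ := gammaLLgA' G ∅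

/-- `G` has no isolated vertices. -/
def isolateFree {V : Type*} (G : SimpleGraph V) : Prop := ∀ v : V, ∃ u, G.Adj v u

/-- The domination number `γ(G)`. -/
noncomputable def domNum {V : Type*} (G : SimpleGraph V) : ℕ :=
  sInf {k | ∃ S : Finset V, S.card = k ∧ ∀ v : V, ∃ u ∈ S, v ∈ closedNbhd G u}

/-- The total domination number `γ_t(G)`. -/
noncomputable def totDomNum {V : Type*} (G : SimpleGraph V) : ℕ :=
  sInf {k | ∃ S : Finset V, S.card = k ∧ ∀ v : V, ∃ u ∈ S, G.Adj u v}

/- Dominator plays the game on `G|A` while imagining a game on `G|B`, in which he follows an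
optimal strategy. Staller's real moves are copied into the imagined game, where they stay
legal because more vertices are already dominated in the real game. When Dominator's
imagined reply is illegal in the real game, he plays any legal vertex instead. Throughout,
every vertex totally dominated (or predominated) in the imagined game is so in the real game,
and every vertex played in the imagined game can no longer be played in the real one; hence
the real game ends no later than the imagined one. -/

section ContinuationPrinciple

variable {V : Type*}

section Games

variable {legalA legalB : List V → V → Prop}

theorem canEnd_of_simulation (R : List V → List V → Prop)
    (legal : ∀ {hA hB v}, R hA hB → legalA hA v → legalB hB v)
    (cons : ∀ {hA hB v}, R hA hB → legalA hA v → R (v :: hA) (v :: hB))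
    (replace : ∀ {hA hB d w}, R hA hB → ¬ legalA hA d → legalA hA w → R (w :: hA) (d :: hB)) :
    ∀ k turn {hA hB}, R hA hB → canEnd legalB k turn hB → canEnd legalA k turn hA := by
  intro k
  induction k with
  | zero => exact fun _ _ _ hR hend v hv => hend v (legal hR hv)
  | succ k ih =>
    rintro (_ | _) hA hB hR hend
    · exact fun v hv => ih true (cons hR hv) (hend v (legal hR hv))
    · rcases hend with hstuck | ⟨d, -, hd_end⟩
      · exact Or.inl fun v hv => hstuck v (legal hR hv)
      by_cases hd : legalA hA d
      · exact Or.inr ⟨d, hd, ih false (cons hR hd) hd_end⟩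
      by_cases hmove : ∃ w, legalA hA w
      · obtain ⟨w, hw⟩ := hmove
        exact Or.inr ⟨w, hw, ih false (replace hR hd hw) hd_end⟩
      · exact Or.inl (not_exists.mp hmove)

theorem canEnd_of_card_le [Fintype V] {legal : List V → V → Prop}
    (not_mem : ∀ {h v}, legal h v → v ∉ h) :
    ∀ k turn {h : List V}, h.Nodup → Fintype.card V ≤ k + h.length → canEnd legal k turn h := by
  intro k
  induction k with
  | zero =>
    intro _ h hnd hcard v hv
    have := (List.nodup_cons.mpr ⟨not_mem hv, hnd⟩).length_le_card
    simp only [List.length_cons] at this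
    omega
  | succ k ih =>
    have next : ∀ turn {h v}, h.Nodup → Fintype.card V ≤ k + 1 + h.length → legal h v →
        canEnd legal k turn (v :: h) := fun turn h v hnd hcard hv =>
      ih turn (List.nodup_cons.mpr ⟨not_mem hv, hnd⟩) (by simp only [List.length_cons]; omega)
    rintro (_ | _) h hnd hcard
    · exact fun v hv => next true hnd hcard hv
    · by_cases hmove : ∃ v, legal h v
      · obtain ⟨v, hv⟩ := hmove
        exact Or.inr ⟨v, hv, next false hnd hcard hv⟩
      · exact Or.inl (not_exists.mp hmove)

theorem gameVal_le_gameVal {turn : Bool} (hB : ∃ k, canEnd legalB k turn [])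
    (hBA : ∀ k, canEnd legalB k turn [] → canEnd legalA k turn []) :
    gameVal legalA turn ≤ gameVal legalB turn :=
  csInf_le_csInf (OrderBot.bddBelow _) hB hBA

end Games

section LGame

variable (G : SimpleGraph V)

theorem totDominatedBy_cons (v : V) (h : List V) :
    totDominatedBy G (v :: h) = G.neighborSet v ∪ totDominatedBy G h := by
  ext x
  simp [totDominatedBy]

theorem totDominatedBy_subset_cons (v : V) (h : List V) :
    totDominatedBy G h ⊆ totDominatedBy G (v :: h) := by
  rw [totDominatedBy_cons]
  exact Set.subset_union_right

/-- `x` can never again be played in the L-game on `G|A` after the moves `h`. -/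
def LSpent (A : Set V) (h : List V) (x : V) : Prop :=
  x ∈ h ∨ closedNbhd G x ⊆ A ∪ totDominatedBy G h

variable {G} {A B : Set V}

theorem lLegal_iff_not_lSpent {h : List V} {x : V} : lLegal G A h x ↔ ¬ LSpent G A h x := by
  rw [lLegal, llLegal, LSpent, Set.sdiff_nonempty]
  tauto

theorem LSpent.cons {h : List V} {x : V} (hx : LSpent G A h x) (w : V) :
    LSpent G A (w :: h) x :=
  hx.imp (List.mem_cons_of_mem w) fun hsub =>
    hsub.trans (Set.union_subset_union_right A (totDominatedBy_subset_cons G w h))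

theorem LSpent.neighborSet_subset {h : List V} {x : V} (hx : LSpent G A h x) :
    G.neighborSet x ⊆ A ∪ totDominatedBy G h := by
  rcases hx with hmem | hsub
  · exact fun _ hy => Or.inr (Set.mem_biUnion hmem hy)
  · exact (Set.subset_insert x _).trans hsub

variable (G A B) in
/-- The invariant of Dominator's imagination strategy: `hA` are the moves of the real game on
`G|A`, `hB` those of the imagined game on `G|B`. -/
def LSimulates (hA hB : List V) : Prop :=
  B ∪ totDominatedBy G hB ⊆ A ∪ totDominatedBy G hA ∧ ∀ x ∈ hB, LSpent G A hA x

theorem lSimulates_nil (hBA : B ⊆ A) : LSimulates G A B [] [] :=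
  ⟨Set.union_subset_union_left _ hBA, fun _ hx => absurd hx List.not_mem_nil⟩

namespace LSimulates

variable {hA hB : List V}

theorem lLegal {v : V} (hR : LSimulates G A B hA hB) (hv : lLegal G A hA v) :
    lLegal G B hB v := by
  have hv_free := lLegal_iff_not_lSpent.mp hv
  obtain ⟨⟨x, hx, hx_new⟩, -⟩ := hv
  exact ⟨⟨x, hx, fun hx_old => hx_new (hR.1 hx_old)⟩, fun hv_mem => hv_free (hR.2 v hv_mem)⟩

theorem cons_of_neighborSet_subset (hR : LSimulates G A B hA hB) {d w : V}
    (hd_nbhd : G.neighborSet d ⊆ A ∪ totDominatedBy G (w :: hA))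
    (hd : LSpent G A (w :: hA) d) : LSimulates G A B (w :: hA) (d :: hB) := by
  refine ⟨?_, ?_⟩
  · rw [totDominatedBy_cons G d, ← Set.union_assoc, Set.union_right_comm]
    exact Set.union_subset
      (hR.1.trans (Set.union_subset_union_right A (totDominatedBy_subset_cons G w hA))) hd_nbhd
  · rintro x (_ | ⟨_, hx⟩)
    · exact hd
    · exact (hR.2 x hx).cons w

theorem cons (hR : LSimulates G A B hA hB) (v : V) : LSimulates G A B (v :: hA) (v :: hB) :=
  hR.cons_of_neighborSet_subset
    (by rw [totDominatedBy_cons]; exact fun _ hy => Or.inr (Or.inl hy))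
    (Or.inl List.mem_cons_self)

theorem cons_of_not_lLegal (hR : LSimulates G A B hA hB) {d : V} (hd : ¬ _root_.lLegal G A hA d)
    (w : V) : LSimulates G A B (w :: hA) (d :: hB) := by
  rw [lLegal_iff_not_lSpent, not_not] at hd
  exact hR.cons_of_neighborSet_subset (hd.cons w).neighborSet_subset (hd.cons w)

end LSimulates

theorem canEnd_lLegal_mono (hBA : B ⊆ A) (k : ℕ) (turn : Bool) :
    canEnd (lLegal G B) k turn [] → canEnd (lLegal G A) k turn [] :=
  canEnd_of_simulation (legalA := lLegal G A) (legalB := lLegal G B) (LSimulates G A B)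
    LSimulates.lLegal (fun hR _ => hR.cons _) (fun hR hd _ => hR.cons_of_not_lLegal hd _) k turn
    (lSimulates_nil hBA)

theorem gameVal_lLegal_mono [Fintype V] (hBA : B ⊆ A) (turn : Bool) :
    gameVal (lLegal G A) turn ≤ gameVal (lLegal G B) turn :=
  gameVal_le_gameVal
    ⟨Fintype.card V, canEnd_of_card_le (fun hv => hv.2) _ turn List.nodup_nil (by simp)⟩
    (canEnd_lLegal_mono hBA · turn)

end LGame

end ContinuationPrinciple

theorem continuation_principle_L_general {V : Type*} [Fintype V] (G : SimpleGraph V)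
    (A B : Set V) (hBA : B ⊆ A) :
    gammaLgA G A ≤ gammaLgA G B ∧ gammaLgA' G A ≤ gammaLgA' G B :=
  ⟨gameVal_lLegal_mono hBA true, gameVal_lLegal_mono hBA false⟩

/-- Continuation Principle for the L-domination game on predominated graphs. -/
theorem continuation_principle_L {V : Type*} [Fintype V] (G : SimpleGraph V)
    (hG : isolateFree G) (A B : Set V) (hBA : B ⊆ A) :
    gammaLgA G A ≤ gammaLgA G B ∧ gammaLgA' G A ≤ gammaLgA' G B :=
  continuation_principle_L_general G A B hBA
end

section
/- If G is a finite simple graph without isolated vertices, then γ_Zg(G) ≤ γ_g(G). -/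
/-!
Dominator plays the Z-domination game by following an optimal strategy for the domination
game. A Z-legal move is always legal in the domination game, so Staller's moves can be fed
to that strategy. When the strategy proposes a vertex `v` that is not Z-legal, `N(v)` is
already dominated but `v` is not, so Dominator plays a neighbour `u` of `v` instead (it
exists as `G` has no isolated vertices): it is Z-legal, and dominates everything `v` would
have. By the continuation principle, dominating more can only shorten the domination game.
-/

section DominationGame

variable {V : Type*} (G : SimpleGraph V)

lemma dominatedBy_cons (v : V) (h : List V) :
    dominatedBy G (v :: h) = closedNbhd G v ∪ dominatedBy G h := by
  simp [dominatedBy]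

variable {G}

lemma dgLegal_of_zLegal {A : Set V} {h : List V} {v : V} (hv : zLegal G A h v) :
    dgLegal G h v := by
  obtain ⟨x, hxv, hx⟩ := hv
  exact ⟨x, Set.mem_insert_of_mem _ hxv, fun hxh => hx (Or.inr hxh)⟩

lemma dgLegal.mono {h h' : List V} (hsub : dominatedBy G h ⊆ dominatedBy G h') {v : V}
    (hv : dgLegal G h' v) : dgLegal G h v := by
  obtain ⟨x, hxv, hx⟩ := hv
  exact ⟨x, hxv, fun hxh => hx (hsub hxh)⟩

lemma closedNbhd_subset_of_not_dgLegal {h : List V} {v : V} (hv : ¬ dgLegal G h v) :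
    closedNbhd G v ⊆ dominatedBy G h := fun x hxv => by
  by_contra hx
  exact hv ⟨x, hxv, hx⟩

lemma compl_dominatedBy_ssubset {h : List V} {v : V} (hv : dgLegal G h v) :
    (dominatedBy G (v :: h))ᶜ ⊂ (dominatedBy G h)ᶜ := by
  obtain ⟨x, hxv, hx⟩ := hv
  have hsub : (dominatedBy G (v :: h))ᶜ ⊆ (dominatedBy G h)ᶜ := by
    rw [dominatedBy_cons]
    exact Set.compl_subset_compl.mpr Set.subset_union_right
  rw [Set.ssubset_iff_of_subset hsub]
  refine ⟨x, hx, fun hx' => hx' ?_⟩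
  rw [dominatedBy_cons]
  exact Or.inl hxv

lemma canEnd_dgLegal_mono {k : ℕ} {t : Bool} {h h' : List V}
    (hsub : dominatedBy G h ⊆ dominatedBy G h') (hc : canEnd (dgLegal G) k t h) :
    canEnd (dgLegal G) k t h' := by
  induction k generalizing t h h' with
  | zero => exact fun v hv => hc v (hv.mono hsub)
  | succ k ih =>
    have hcons (v : V) : dominatedBy G (v :: h) ⊆ dominatedBy G (v :: h') := by
      simpa only [dominatedBy_cons] using Set.union_subset_union_right _ hsub
    cases t with
    | false => exact fun s hs => ih (hcons s) (hc s (hs.mono hsub))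
    | true =>
      rcases hc with hend | ⟨v, hv, hcv⟩
      · exact Or.inl fun w hw => hend w (hw.mono hsub)
      by_cases hv' : dgLegal G h' v
      · exact Or.inr ⟨v, hv', ih (hcons v) hcv⟩
      -- `v` is useless after `h'`, so any legal move will do.
      by_cases hmove : ∃ w, dgLegal G h' w
      · obtain ⟨w, hw⟩ := hmove
        refine Or.inr ⟨w, hw, ih ?_ hcv⟩
        rw [dominatedBy_cons, dominatedBy_cons]
        exact (Set.union_subset (closedNbhd_subset_of_not_dgLegal hv') hsub).trans
          Set.subset_union_right
      · exact Or.inl (not_exists.mp hmove)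

lemma canEnd_dgLegal_of_ncard_le [Finite V] {n : ℕ} {t : Bool} {h : List V}
    (hn : (dominatedBy G h)ᶜ.ncard ≤ n) : canEnd (dgLegal G) n t h := by
  have hlt {h : List V} {v : V} (hv : dgLegal G h v) :
      (dominatedBy G (v :: h))ᶜ.ncard < (dominatedBy G h)ᶜ.ncard :=
    Set.ncard_lt_ncard (compl_dominatedBy_ssubset hv)
  induction n generalizing t h with
  | zero => exact fun v hv => by have := hlt hv; omega
  | succ n ih =>
    cases t with
    | false => exact fun v hv => ih (by have := hlt hv; omega)
    | true =>
      by_cases hmove : ∃ v, dgLegal G h v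
      · obtain ⟨v, hv⟩ := hmove
        exact Or.inr ⟨v, hv, ih (by have := hlt hv; omega)⟩
      · exact Or.inl (not_exists.mp hmove)

lemma exists_zLegal_dominatedBy_cons_subset (hG : isolateFree G) {h : List V} {v : V}
    (hv : dgLegal G h v) :
    ∃ u, zLegal G ∅ h u ∧ dominatedBy G (v :: h) ⊆ dominatedBy G (u :: h) := by
  by_cases hz : zLegal G ∅ h v
  · exact ⟨v, hz, subset_rfl⟩
  have hN : G.neighborSet v ⊆ dominatedBy G h := fun x hxv => by
    by_contra hx
    exact hz ⟨x, hxv, by simpa using hx⟩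
  have hvh : v ∉ dominatedBy G h := by
    obtain ⟨x, hxv | hxv, hx⟩ := hv
    · exact hxv ▸ hx
    · exact absurd (hN hxv) hx
  obtain ⟨u, hvu⟩ := hG v
  refine ⟨u, ⟨v, hvu.symm, by simpa using hvh⟩, ?_⟩
  rw [dominatedBy_cons, dominatedBy_cons]
  refine Set.union_subset (Set.insert_subset ?_ ?_) Set.subset_union_right
  · exact Or.inl (Set.mem_insert_of_mem _ hvu.symm)
  · exact hN.trans Set.subset_union_right

lemma canEnd_zLegal_of_canEnd_dgLegal (hG : isolateFree G) {k : ℕ} {t : Bool} {h : List V}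
    (hc : canEnd (dgLegal G) k t h) : canEnd (zLegal G ∅) k t h := by
  induction k generalizing t h with
  | zero => exact fun v hv => hc v (dgLegal_of_zLegal hv)
  | succ k ih =>
    cases t with
    | false => exact fun s hs => ih (hc s (dgLegal_of_zLegal hs))
    | true =>
      rcases hc with hend | ⟨v, hv, hcv⟩
      · exact Or.inl fun w hw => hend w (dgLegal_of_zLegal hw)
      obtain ⟨u, hu, hsub⟩ := exists_zLegal_dominatedBy_cons_subset hG hv
      exact Or.inr ⟨u, hu, ih (canEnd_dgLegal_mono hsub hcv)⟩

end DominationGame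

lemma gameVal_le_gameVal_s6 {V : Type*} {legal legal' : List V → V → Prop} {t : Bool}
    (hfin : ∃ k, canEnd legal k t []) (himp : ∀ k, canEnd legal k t [] → canEnd legal' k t []) :
    gameVal legal' t ≤ gameVal legal t :=
  Nat.sInf_le (himp _ (Nat.sInf_mem hfin))

/-- The game Z-domination number is at most the game domination number. -/
theorem gammaZg_le_gammaG {V : Type*} [Fintype V] (G : SimpleGraph V)
    (hG : isolateFree G) :
    gammaZg G ≤ gammaG G := by
  have hfin : canEnd (dgLegal G) (Nat.card V) true [] :=
    canEnd_dgLegal_of_ncard_le (by simp [dominatedBy])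
  exact gameVal_le_gameVal_s6 ⟨_, hfin⟩ fun _ => canEnd_zLegal_of_canEnd_dgLegal hG
end
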